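/- arXiv:1102.5067 — 2 statements merged into one kernel-verified Lean document; each statement's English description precedes it below -/
import Mathlib

section
/- Let h be the flow of σ and b as in the context. Then for all x₁, x₂, y ∈ ℝ, |exp(−∫₀^y σ'(h(x₁,s)) ds) · b(h(x₁,y)) − exp(−∫₀^y σ'(h(x₂,s)) ds) · b(h(x₂,y))| ≤ exp(2 M₂ |y|) (M₁ M₃ |y| + M₄) |x₁ − x₂|. -/
/-!
Since `∂ₓh(x, y) = exp (∫₀^y σ'(h(x, s)) ds)` lies in `[e^{-M₂|y|}, e^{M₂|y|}]`, the map
`x ↦ h(x, y)` is `e^{M₂|y|}`-Lipschitz. Hence `b(h(·, y))` is `M₄ e^{M₂|y|}`-Lipschitz, and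
integrating the `M₃ e^{M₂|y|}`-Lipschitz bound on `σ'(h(·, s))` over `s` between `0` and `y`
makes the exponent `-∫₀^y σ'(h(x, s)) ds` Lipschitz with constant `M₃ |y| e^{M₂|y|}`. The exponent
is at most `M₂|y|`, where `exp` is `e^{M₂|y|}`-Lipschitz, and writing
`a b - c d = a (b - d) + (a - c) d` combines the two estimates.
-/

open Real Set intervalIntegral
open scoped Interval

lemma abs_sub_le_of_hasDerivAt_abs_le {f f' : ℝ → ℝ} {C : ℝ}
    (hf : ∀ x, HasDerivAt f (f' x) x) (hC : ∀ x, |f' x| ≤ C) (u v : ℝ) :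
    |f u - f v| ≤ C * |u - v| := by
  simpa using Convex.norm_image_sub_le_of_norm_hasDerivWithin_le
    (fun x _ => (hf x).hasDerivWithinAt) (fun x _ => hC x) convex_univ (mem_univ v) (mem_univ u)

lemma abs_exp_sub_exp_le {a b c : ℝ} (ha : a ≤ c) (hb : b ≤ c) :
    |exp a - exp b| ≤ exp c * |a - b| := by
  simpa using Convex.norm_image_sub_le_of_norm_hasDerivWithin_le
    (fun x _ => (hasDerivAt_exp x).hasDerivWithinAt)
    (fun x (hx : x ≤ c) => by simpa using exp_le_exp.mpr hx) (convex_Iic c) hb ha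

lemma abs_mul_sub_mul_le (a b c d : ℝ) : |a * b - c * d| ≤ |a| * |b - d| + |a - c| * |d| := by
  calc |a * b - c * d| = |a * (b - d) + (a - c) * d| := by ring_nf
    _ ≤ |a * (b - d)| + |(a - c) * d| := abs_add_le _ _
    _ = |a| * |b - d| + |a - c| * |d| := by rw [abs_mul, abs_mul]

lemma abs_integral_le_mul_abs {f : ℝ → ℝ} {C y : ℝ} (hf : ∀ s ∈ Ι 0 y, |f s| ≤ C) :
    |∫ s in (0:ℝ)..y, f s| ≤ C * |y| := by
  have := norm_integral_le_of_norm_le_const (a := 0) (b := y) (f := f) hf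
  rwa [sub_zero] at this

section Flow

variable {σ : ℝ → ℝ} {h : ℝ → ℝ → ℝ} {M₂ : ℝ}

lemma abs_integral_deriv_comp_le (hσ' : ∀ x, |deriv σ x| ≤ M₂) (x y : ℝ) :
    |∫ s in (0:ℝ)..y, deriv σ (h x s)| ≤ M₂ * |y| :=
  abs_integral_le_mul_abs fun s _ => hσ' (h x s)

lemma abs_flow_sub_le (hσ' : ∀ x, |deriv σ x| ≤ M₂)
    (hhx : ∀ x y, HasDerivAt (fun x => h x y) (exp (∫ s in (0:ℝ)..y, deriv σ (h x s))) x)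
    (y u v : ℝ) : |h u y - h v y| ≤ exp (M₂ * |y|) * |u - v| := by
  refine abs_sub_le_of_hasDerivAt_abs_le (hhx · y) (fun x => ?_) u v
  rw [abs_of_pos (exp_pos _)]
  exact exp_le_exp.mpr (le_of_abs_le (abs_integral_deriv_comp_le hσ' x y))

lemma abs_integral_deriv_flow_sub_le {M₃ : ℝ} (hσ : ContDiff ℝ 2 σ)
    (hσ' : ∀ x, |deriv σ x| ≤ M₂) (hσ'' : ∀ x, |deriv (deriv σ) x| ≤ M₃)
    (hhy : ∀ x y, HasDerivAt (fun y => h x y) (σ (h x y)) y)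
    (hhx : ∀ x y, HasDerivAt (fun x => h x y) (exp (∫ s in (0:ℝ)..y, deriv σ (h x s))) x)
    (x₁ x₂ y : ℝ) :
    |(∫ s in (0:ℝ)..y, deriv σ (h x₁ s)) - ∫ s in (0:ℝ)..y, deriv σ (h x₂ s)| ≤
      M₃ * exp (M₂ * |y|) * |x₁ - x₂| * |y| := by
  have hM₂ : 0 ≤ M₂ := (abs_nonneg _).trans (hσ' 0)
  have hM₃ : 0 ≤ M₃ := (abs_nonneg _).trans (hσ'' 0)
  have hσ'_lip : ∀ u v, |deriv σ u - deriv σ v| ≤ M₃ * |u - v| :=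
    abs_sub_le_of_hasDerivAt_abs_le
      (fun x => ((hσ.deriv' (n := 1)).differentiable one_ne_zero x).hasDerivAt) hσ''
  have hint : ∀ x, IntervalIntegrable (fun s => deriv σ (h x s)) MeasureTheory.volume 0 y :=
    fun x => ((hσ.continuous_deriv (by norm_num)).comp
      (continuous_iff_continuousAt.mpr fun s => (hhy x s).continuousAt)).intervalIntegrable 0 y
  rw [← integral_sub (hint x₁) (hint x₂)]
  refine abs_integral_le_mul_abs fun s hs => ?_
  have hsy : |s| ≤ |y| := by simpa using abs_sub_left_of_mem_uIcc (uIoc_subset_uIcc hs)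
  calc |deriv σ (h x₁ s) - deriv σ (h x₂ s)| ≤ M₃ * |h x₁ s - h x₂ s| := hσ'_lip _ _
    _ ≤ M₃ * (exp (M₂ * |s|) * |x₁ - x₂|) := by gcongr; exact abs_flow_sub_le hσ' hhx s x₁ x₂
    _ ≤ M₃ * exp (M₂ * |y|) * |x₁ - x₂| := by rw [← mul_assoc]; gcongr

end Flow

theorem doss_field_lipschitz_x_general
    (σ b : ℝ → ℝ) (h : ℝ → ℝ → ℝ) (M₁ M₂ M₃ M₄ : ℝ)
    (hσ : ContDiff ℝ 2 σ)
    (hσ'b : ∀ x, |deriv σ x| ≤ M₂)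
    (hσ''b : ∀ x, |deriv (deriv σ) x| ≤ M₃)
    (hb : ContDiff ℝ 1 b)
    (hbb : ∀ x, |b x| ≤ M₁)
    (hb'b : ∀ x, |deriv b x| ≤ M₄)
    (hhy : ∀ x y, HasDerivAt (fun y => h x y) (σ (h x y)) y)
    (hhx : ∀ x y, HasDerivAt (fun x => h x y)
      (Real.exp (∫ s in (0:ℝ)..y, deriv σ (h x s))) x) :
    ∀ x₁ x₂ y : ℝ,
      |Real.exp (-∫ s in (0:ℝ)..y, deriv σ (h x₁ s)) * b (h x₁ y) -
        Real.exp (-∫ s in (0:ℝ)..y, deriv σ (h x₂ s)) * b (h x₂ y)| ≤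
        Real.exp (2 * M₂ * |y|) * (M₁ * M₃ * |y| + M₄) * |x₁ - x₂| := by
  intro x₁ x₂ y
  have hM₄ : 0 ≤ M₄ := (abs_nonneg _).trans (hb'b 0)
  have hexponent : ∀ x, -∫ s in (0:ℝ)..y, deriv σ (h x s) ≤ M₂ * |y| := fun x =>
    (neg_le_abs _).trans (abs_integral_deriv_comp_le hσ'b x y)
  have hb_lip : |b (h x₁ y) - b (h x₂ y)| ≤ M₄ * (exp (M₂ * |y|) * |x₁ - x₂|) :=
    (abs_sub_le_of_hasDerivAt_abs_le (fun x => (hb.differentiable one_ne_zero x).hasDerivAt)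
      hb'b _ _).trans (by gcongr; exact abs_flow_sub_le hσ'b hhx y x₁ x₂)
  have hexp_lip : |exp (-∫ s in (0:ℝ)..y, deriv σ (h x₁ s)) -
      exp (-∫ s in (0:ℝ)..y, deriv σ (h x₂ s))| ≤
      exp (M₂ * |y|) * (M₃ * exp (M₂ * |y|) * |x₁ - x₂| * |y|) := by
    refine (abs_exp_sub_exp_le (hexponent x₁) (hexponent x₂)).trans ?_
    rw [neg_sub_neg, abs_sub_comm]
    gcongr
    exact abs_integral_deriv_flow_sub_le hσ hσ'b hσ''b hhy hhx x₁ x₂ y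
  calc _ ≤ _ := abs_mul_sub_mul_le _ _ _ _
    _ ≤ exp (M₂ * |y|) * (M₄ * (exp (M₂ * |y|) * |x₁ - x₂|)) +
          exp (M₂ * |y|) * (M₃ * exp (M₂ * |y|) * |x₁ - x₂| * |y|) * M₁ := by
        rw [abs_of_pos (exp_pos _)]
        exact add_le_add (mul_le_mul (exp_le_exp.mpr (hexponent x₁)) hb_lip (abs_nonneg _)
          (exp_pos _).le) (mul_le_mul hexp_lip (hbb _) (abs_nonneg _)
          ((abs_nonneg _).trans hexp_lip))
    _ = _ := by rw [mul_assoc 2, two_mul, exp_add]; ring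

/-- Lipschitz estimate in `x` of `(∂h/∂x)⁻¹ · b∘h`:
`|exp(−∫₀^y σ'(h(x₁,s))ds) b(h(x₁,y)) − exp(−∫₀^y σ'(h(x₂,s))ds) b(h(x₂,y))|
  ≤ exp(2M₂|y|)(M₁M₃|y| + M₄)|x₁ − x₂|`. -/
theorem doss_field_lipschitz_x
    (σ b : ℝ → ℝ) (h : ℝ → ℝ → ℝ) (M₁ M₂ M₃ M₄ M₅ : ℝ)
    (hM₁ : 0 < M₁) (hM₂ : 0 < M₂) (hM₃ : 0 < M₃) (hM₄ : 0 < M₄) (hM₅ : 0 < M₅)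
    (hσ : ContDiff ℝ 2 σ)
    (hσb : ∀ x, |σ x| ≤ M₅)
    (hσ'b : ∀ x, |deriv σ x| ≤ M₂)
    (hσ''b : ∀ x, |deriv (deriv σ) x| ≤ M₃)
    (hb : ContDiff ℝ 1 b)
    (hbb : ∀ x, |b x| ≤ M₁)
    (hb'b : ∀ x, |deriv b x| ≤ M₄)
    (hh0 : ∀ x, h x 0 = x)
    (hhy : ∀ x y, HasDerivAt (fun y => h x y) (σ (h x y)) y)
    (hhx : ∀ x y, HasDerivAt (fun x => h x y)
      (Real.exp (∫ s in (0:ℝ)..y, deriv σ (h x s))) x) :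
    ∀ x₁ x₂ y : ℝ,
      |Real.exp (-∫ s in (0:ℝ)..y, deriv σ (h x₁ s)) * b (h x₁ y) -
        Real.exp (-∫ s in (0:ℝ)..y, deriv σ (h x₂ s)) * b (h x₂ y)| ≤
        Real.exp (2 * M₂ * |y|) * (M₁ * M₃ * |y| + M₄) * |x₁ - x₂| :=
  doss_field_lipschitz_x_general σ b h M₁ M₂ M₃ M₄ hσ hσ'b hσ''b hb hbb hb'b hhy hhx
end

section
/- Let h be the flow of σ and b as in the context, define f(x,y) = exp(−∫₀^y σ'(h(x,u)) du) · b(h(x,y)), and let T > 0 and x₀ ∈ ℝ. Let w, w̃ : [0,T] → ℝ be continuous with sup_{0≤t≤T} |w(t) − w̃(t)| ≤ 1, and set W = sup_{0≤t≤T} |w(t)|. Let Y, Ỹ : [0,T] → ℝ be differentiable with Y(0) = Ỹ(0) = x₀, Y'(t) = f(Y(t), w(t)) and Ỹ'(t) = f(Ỹ(t), w̃(t)) for all t ∈ [0,T]. Then sup_{0≤t≤T} |Y(t) − Ỹ(t)| ≤ α · exp(T·κ) · sup_{0≤t≤T} |w(t) − w̃(t)|, where α = T (M₁ M₂ exp(M₂)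 + M₄ M₅) exp(M₂ W) and κ = (M₁ M₃ W + M₄) exp(2 M₂ W). -/
/-!
Both estimates on `f(x, y) = exp(-∫₀^y σ'(h(x, u)) du) · b(h(x, y))` come from the flow bounds
`|∂ₓ h(x, y)| ≤ exp(M₂|y|)` and `|∂_y h| ≤ M₅`: on `|y| ≤ W` the field is `κ`-Lipschitz in `x`,
and moving `y` by at most `1` changes it by at most `(M₁M₂e^{M₂} + M₄M₅)e^{M₂W}` times the step.
So `D = Y − Ỹ` satisfies `|D'| ≤ κ|D| + ε` with `ε` that constant times `sup |w − w̃|`, and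
Grönwall's inequality with `D(0) = 0` gives `|D(t)| ≤ ε t e^{κt} ≤ ε T e^{Tκ}`.
-/

open Real Set

lemma abs_sub_le_mul_abs_sub_of_hasDerivAt {g g' : ℝ → ℝ} {C : ℝ}
    (hg : ∀ x, HasDerivAt g (g' x) x) (hC : ∀ x, |g' x| ≤ C) (a c : ℝ) :
    |g a - g c| ≤ C * |a - c| := by
  simpa using convex_univ.norm_image_sub_le_of_norm_hasDerivWithin_le
    (fun x _ => (hg x).hasDerivWithinAt) (fun x _ => hC x) (mem_univ c) (mem_univ a)

lemma Real.abs_exp_sub_exp_le (p q : ℝ) : |exp p - exp q| ≤ exp (max p q) * |p - q| := by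
  have hbound : ∀ x ∈ uIcc q p, ‖exp x‖ ≤ exp (max p q) := fun x hx => by
    rw [norm_eq_abs, abs_of_pos (exp_pos x), max_comm]
    exact exp_le_exp.2 hx.2
  simpa using (convex_uIcc q p).norm_image_sub_le_of_norm_hasDerivWithin_le
    (fun x _ => (hasDerivAt_exp x).hasDerivWithinAt) hbound left_mem_uIcc right_mem_uIcc

lemma Real.abs_exp_mul_sub_exp_mul_le (p q u v : ℝ) :
    |exp p * u - exp q * v| ≤ exp (max p q) * |p - q| * |v| + exp p * |u - v| := by
  calc |exp p * u - exp q * v| = |(exp p - exp q) * v + exp p * (u - v)| := by ring_nf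
    _ ≤ |exp p - exp q| * |v| + exp p * |u - v| := by
      simpa only [abs_mul, abs_exp] using abs_add_le ((exp p - exp q) * v) (exp p * (u - v))
    _ ≤ exp (max p q) * |p - q| * |v| + exp p * |u - v| := by
      gcongr; exact abs_exp_sub_exp_le p q

lemma gronwallBound_zero_le {K ε x : ℝ} (hK : 0 ≤ K) (hε : 0 ≤ ε) :
    gronwallBound 0 K ε x ≤ ε * x * exp (K * x) := by
  rcases hK.eq_or_lt with rfl | hK
  · simp [gronwallBound_K0]
  -- `exp (K x) - 1 ≤ K x exp (K x)` is `1 - K x ≤ exp (-K x)` multiplied by `exp (K x)`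
  have hexp : exp (K * x) - 1 ≤ K * x * exp (K * x) := by
    have := mul_le_mul_of_nonneg_right (one_sub_le_exp_neg (K * x)) (exp_pos (K * x)).le
    rw [← exp_add, neg_add_cancel, exp_zero, sub_mul, one_mul] at this
    linarith
  simp only [gronwallBound_of_K_ne_0 hK.ne', zero_mul, zero_add]
  calc ε / K * (exp (K * x) - 1) ≤ ε / K * (K * x * exp (K * x)) := by gcongr
    _ = ε * x * exp (K * x) := by field_simp

lemma norm_le_mul_exp_of_norm_deriv_right_le {E : Type*} [NormedAddCommGroup E]
    [NormedSpace ℝ E] {g g' : ℝ → E} {K ε T : ℝ} (hK : 0 ≤ K) (hε : 0 ≤ ε)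
    (hg : ContinuousOn g (Icc 0 T)) (hg' : ∀ t ∈ Ico 0 T, HasDerivWithinAt g (g' t) (Ici t) t)
    (hg0 : g 0 = 0) (bound : ∀ t ∈ Ico 0 T, ‖g' t‖ ≤ K * ‖g t‖ + ε) :
    ∀ t ∈ Icc 0 T, ‖g t‖ ≤ ε * t * exp (K * t) := fun t ht => by
  have hgron := norm_le_gronwallBound_of_norm_deriv_right_le hg hg'
    (show ‖g 0‖ ≤ 0 by simp [hg0]) bound t ht
  rw [sub_zero] at hgron
  exact hgron.trans (gronwallBound_zero_le hK hε)

noncomputable def dossField (σ b : ℝ → ℝ) (h : ℝ → ℝ → ℝ) (x y : ℝ) : ℝ :=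
  exp (-∫ u in (0:ℝ)..y, deriv σ (h x u)) * b (h x y)

section Flow

variable {σ b : ℝ → ℝ} {h : ℝ → ℝ → ℝ} {M₁ M₂ M₃ M₄ M₅ : ℝ}

lemma intervalIntegrable_deriv_comp_flow (hσ' : Continuous (deriv σ))
    (hhy : ∀ x y, HasDerivAt (fun y => h x y) (σ (h x y)) y) (x a c : ℝ) :
    IntervalIntegrable (fun u => deriv σ (h x u)) MeasureTheory.volume a c :=
  (hσ'.comp (continuous_iff_continuousAt.2 fun y => (hhy x y).continuousAt)).intervalIntegrable a c

lemma abs_integral_deriv_comp_flow_le (hσ'b : ∀ x, |deriv σ x| ≤ M₂) (x y : ℝ) :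
    |∫ u in (0:ℝ)..y, deriv σ (h x u)| ≤ M₂ * |y| := by
  simpa using intervalIntegral.norm_integral_le_of_norm_le_const (a := 0) (b := y)
    (f := fun u => deriv σ (h x u)) fun u _ => hσ'b (h x u)

lemma abs_integral_deriv_comp_flow_sub_le_right (hσ' : Continuous (deriv σ))
    (hσ'b : ∀ x, |deriv σ x| ≤ M₂) (hhy : ∀ x y, HasDerivAt (fun y => h x y) (σ (h x y)) y)
    (x a c : ℝ) :
    |(∫ u in (0:ℝ)..a, deriv σ (h x u)) - ∫ u in (0:ℝ)..c, deriv σ (h x u)| ≤ M₂ * |a - c| := by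
  rw [intervalIntegral.integral_interval_sub_left
    (intervalIntegrable_deriv_comp_flow hσ' hhy x 0 a) (intervalIntegrable_deriv_comp_flow hσ' hhy x 0 c)]
  simpa using intervalIntegral.norm_integral_le_of_norm_le_const
    (f := fun u => deriv σ (h x u)) fun u _ => hσ'b (h x u)

lemma abs_flow_sub_flow_le (hσ'b : ∀ x, |deriv σ x| ≤ M₂)
    (hhx : ∀ x y, HasDerivAt (fun x => h x y) (exp (∫ s in (0:ℝ)..y, deriv σ (h x s))) x)
    (x x' y : ℝ) : |h x y - h x' y| ≤ exp (M₂ * |y|) * |x - x'| := by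
  refine abs_sub_le_mul_abs_sub_of_hasDerivAt (fun x => hhx x y) (fun x => ?_) x x'
  rw [abs_of_pos (exp_pos _)]
  exact exp_le_exp.2 ((le_abs_self _).trans (abs_integral_deriv_comp_flow_le hσ'b x y))

lemma abs_integral_deriv_comp_flow_sub_le_left (hσ' : Differentiable ℝ (deriv σ))
    (hσ'b : ∀ x, |deriv σ x| ≤ M₂) (hσ''b : ∀ x, |deriv (deriv σ) x| ≤ M₃)
    (hhy : ∀ x y, HasDerivAt (fun y => h x y) (σ (h x y)) y)
    (hhx : ∀ x y, HasDerivAt (fun x => h x y) (exp (∫ s in (0:ℝ)..y, deriv σ (h x s))) x)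
    (x x' y : ℝ) :
    |(∫ u in (0:ℝ)..y, deriv σ (h x u)) - ∫ u in (0:ℝ)..y, deriv σ (h x' u)| ≤
      M₃ * exp (M₂ * |y|) * |x - x'| * |y| := by
  have hM₂ : 0 ≤ M₂ := (abs_nonneg _).trans (hσ'b 0)
  have hM₃ : 0 ≤ M₃ := (abs_nonneg _).trans (hσ''b 0)
  have hbound : ∀ u ∈ uIoc 0 y, ‖deriv σ (h x u) - deriv σ (h x' u)‖ ≤
      M₃ * exp (M₂ * |y|) * |x - x'| := fun u hu => by
    have hu : |u| ≤ |y| := by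
      simpa using abs_sub_le_of_uIcc_subset_uIcc (uIcc_subset_uIcc_left (uIoc_subset_uIcc hu))
    calc |deriv σ (h x u) - deriv σ (h x' u)| ≤ M₃ * |h x u - h x' u| :=
          abs_sub_le_mul_abs_sub_of_hasDerivAt (fun z => (hσ' z).hasDerivAt) hσ''b _ _
      _ ≤ M₃ * (exp (M₂ * |u|) * |x - x'|) := by gcongr; exact abs_flow_sub_flow_le hσ'b hhx x x' u
      _ ≤ M₃ * exp (M₂ * |y|) * |x - x'| := by rw [← mul_assoc]; gcongr
  have hint := intervalIntegrable_deriv_comp_flow hσ'.continuous hhy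
  rw [← intervalIntegral.integral_sub (hint x 0 y) (hint x' 0 y)]
  simpa using intervalIntegral.norm_integral_le_of_norm_le_const hbound

lemma abs_dossField_sub_le_left (hσ' : Differentiable ℝ (deriv σ))
    (hσ'b : ∀ x, |deriv σ x| ≤ M₂) (hσ''b : ∀ x, |deriv (deriv σ) x| ≤ M₃)
    (hb : Differentiable ℝ b) (hbb : ∀ x, |b x| ≤ M₁) (hb'b : ∀ x, |deriv b x| ≤ M₄)
    (hhy : ∀ x y, HasDerivAt (fun y => h x y) (σ (h x y)) y)
    (hhx : ∀ x y, HasDerivAt (fun x => h x y) (exp (∫ s in (0:ℝ)..y, deriv σ (h x s))) x)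
    {W y : ℝ} (hy : |y| ≤ W) (x x' : ℝ) :
    |dossField σ b h x y - dossField σ b h x' y| ≤
      (M₁ * M₃ * W + M₄) * exp (2 * M₂ * W) * |x - x'| := by
  have hM₁ : 0 ≤ M₁ := (abs_nonneg _).trans (hbb 0)
  have hM₂ : 0 ≤ M₂ := (abs_nonneg _).trans (hσ'b 0)
  have hM₃ : 0 ≤ M₃ := (abs_nonneg _).trans (hσ''b 0)
  have hJ : ∀ x, -∫ u in (0:ℝ)..y, deriv σ (h x u) ≤ M₂ * |y| := fun x =>
    (neg_le_abs _).trans (abs_integral_deriv_comp_flow_le hσ'b x y)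
  have hM₄ : 0 ≤ M₄ := (abs_nonneg _).trans (hb'b 0)
  have hW : 0 ≤ W := (abs_nonneg y).trans hy
  calc |dossField σ b h x y - dossField σ b h x' y|
      ≤ exp (M₂ * |y|) * (M₃ * exp (M₂ * |y|) * |x - x'| * |y|) * M₁ +
          exp (M₂ * |y|) * (M₄ * (exp (M₂ * |y|) * |x - x'|)) := by
        refine (abs_exp_mul_sub_exp_mul_le _ _ _ _).trans ?_
        gcongr ?_ * ?_ * ?_ + ?_ * ?_
        · exact exp_le_exp.2 (max_le (hJ x) (hJ x'))
        · rw [neg_sub_neg, abs_sub_comm]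
          exact abs_integral_deriv_comp_flow_sub_le_left hσ' hσ'b hσ''b hhy hhx x x' y
        · exact hbb _
        · exact exp_le_exp.2 (hJ x)
        · calc |b (h x y) - b (h x' y)| ≤ M₄ * |h x y - h x' y| :=
                abs_sub_le_mul_abs_sub_of_hasDerivAt (fun z => (hb z).hasDerivAt) hb'b _ _
            _ ≤ M₄ * (exp (M₂ * |y|) * |x - x'|) := by gcongr; exact abs_flow_sub_flow_le hσ'b hhx x x' y
    _ = (M₁ * M₃ * |y| + M₄) * exp (2 * M₂ * |y|) * |x - x'| := by
        rw [show 2 * M₂ * |y| = M₂ * |y| + M₂ * |y| by ring, exp_add]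
        ring
    _ ≤ (M₁ * M₃ * W + M₄) * exp (2 * M₂ * W) * |x - x'| := by gcongr

lemma abs_dossField_sub_le_right (hσ' : Continuous (deriv σ))
    (hσb : ∀ x, |σ x| ≤ M₅) (hσ'b : ∀ x, |deriv σ x| ≤ M₂)
    (hb : Differentiable ℝ b) (hbb : ∀ x, |b x| ≤ M₁) (hb'b : ∀ x, |deriv b x| ≤ M₄)
    (hhy : ∀ x y, HasDerivAt (fun y => h x y) (σ (h x y)) y)
    {W a c : ℝ} (ha : |a| ≤ W) (hac : |a - c| ≤ 1) (x : ℝ) :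
    |dossField σ b h x a - dossField σ b h x c| ≤
      (M₁ * M₂ * exp M₂ + M₄ * M₅) * exp (M₂ * W) * |a - c| := by
  have hM₂ : 0 ≤ M₂ := (abs_nonneg _).trans (hσ'b 0)
  have hM₄ : 0 ≤ M₄ := (abs_nonneg _).trans (hb'b 0)
  have hc : |c| ≤ W + 1 := by
    linarith [abs_sub_abs_le_abs_sub c a, abs_sub_comm c a]
  have hJ : ∀ y, -∫ u in (0:ℝ)..y, deriv σ (h x u) ≤ M₂ * |y| := fun y =>
    (neg_le_abs _).trans (abs_integral_deriv_comp_flow_le hσ'b x y)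
  calc |dossField σ b h x a - dossField σ b h x c|
      ≤ exp (M₂ * (W + 1)) * (M₂ * |a - c|) * M₁ + exp (M₂ * W) * (M₄ * (M₅ * |a - c|)) := by
        refine (abs_exp_mul_sub_exp_mul_le _ _ _ _).trans ?_
        gcongr ?_ * ?_ * ?_ + ?_ * ?_
        · refine exp_le_exp.2 (max_le ((hJ a).trans ?_) ((hJ c).trans ?_)) <;> gcongr
          linarith
        · rw [neg_sub_neg, abs_sub_comm]
          exact abs_integral_deriv_comp_flow_sub_le_right hσ' hσ'b hhy x a c
        · exact hbb _
        · exact exp_le_exp.2 ((hJ a).trans (by gcongr))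
        · calc |b (h x a) - b (h x c)| ≤ M₄ * |h x a - h x c| :=
                abs_sub_le_mul_abs_sub_of_hasDerivAt (fun z => (hb z).hasDerivAt) hb'b _ _
            _ ≤ M₄ * (M₅ * |a - c|) := by
                gcongr
                exact abs_sub_le_mul_abs_sub_of_hasDerivAt (hhy x) (fun y => hσb (h x y)) a c
    _ = (M₁ * M₂ * exp M₂ + M₄ * M₅) * exp (M₂ * W) * |a - c| := by
        rw [mul_add, mul_one, exp_add]
        ring

lemma abs_dossField_sub_dossField_le (hσ' : Differentiable ℝ (deriv σ))
    (hσb : ∀ x, |σ x| ≤ M₅) (hσ'b : ∀ x, |deriv σ x| ≤ M₂)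
    (hσ''b : ∀ x, |deriv (deriv σ) x| ≤ M₃)
    (hb : Differentiable ℝ b) (hbb : ∀ x, |b x| ≤ M₁) (hb'b : ∀ x, |deriv b x| ≤ M₄)
    (hhy : ∀ x y, HasDerivAt (fun y => h x y) (σ (h x y)) y)
    (hhx : ∀ x y, HasDerivAt (fun x => h x y) (exp (∫ s in (0:ℝ)..y, deriv σ (h x s))) x)
    {W a c : ℝ} (ha : |a| ≤ W) (hac : |a - c| ≤ 1) (x x' : ℝ) :
    |dossField σ b h x a - dossField σ b h x' c| ≤
      (M₁ * M₃ * W + M₄) * exp (2 * M₂ * W) * |x - x'| +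
        (M₁ * M₂ * exp M₂ + M₄ * M₅) * exp (M₂ * W) * |a - c| :=
  (abs_sub_le _ (dossField σ b h x' a) _).trans <| add_le_add
    (abs_dossField_sub_le_left hσ' hσ'b hσ''b hb hbb hb'b hhy hhx ha x x')
    (abs_dossField_sub_le_right hσ'.continuous hσb hσ'b hb hbb hb'b hhy ha hac x')

end Flow

theorem doss_ode_comparison_general
    (σ b : ℝ → ℝ) (h : ℝ → ℝ → ℝ) (M₁ M₂ M₃ M₄ M₅ : ℝ)
    (hσ : ContDiff ℝ 2 σ)
    (hσb : ∀ x, |σ x| ≤ M₅)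
    (hσ'b : ∀ x, |deriv σ x| ≤ M₂)
    (hσ''b : ∀ x, |deriv (deriv σ) x| ≤ M₃)
    (hb : ContDiff ℝ 1 b)
    (hbb : ∀ x, |b x| ≤ M₁)
    (hb'b : ∀ x, |deriv b x| ≤ M₄)
    (hhy : ∀ x y, HasDerivAt (fun y => h x y) (σ (h x y)) y)
    (hhx : ∀ x y, HasDerivAt (fun x => h x y)
      (Real.exp (∫ s in (0:ℝ)..y, deriv σ (h x s))) x)
    (f : ℝ → ℝ → ℝ)
    (hf : ∀ x y, f x y = Real.exp (-∫ u in (0:ℝ)..y, deriv σ (h x u)) * b (h x y))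
    (T : ℝ) (x₀ : ℝ)
    (w w' : ℝ → ℝ)
    (hw : ContinuousOn w (Set.Icc 0 T)) (hw' : ContinuousOn w' (Set.Icc 0 T))
    (W Δ : ℝ)
    (hW : W = sSup ((fun t => |w t|) '' Set.Icc (0 : ℝ) T))
    (hΔ : Δ = sSup ((fun t => |w t - w' t|) '' Set.Icc (0 : ℝ) T))
    (hΔ1 : Δ ≤ 1)
    (Y Y' : ℝ → ℝ)
    (hY0 : Y 0 = x₀) (hY'0 : Y' 0 = x₀)
    (hYode : ∀ t ∈ Set.Icc (0 : ℝ) T, HasDerivAt Y (f (Y t) (w t)) t)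
    (hY'ode : ∀ t ∈ Set.Icc (0 : ℝ) T, HasDerivAt Y' (f (Y' t) (w' t)) t) :
    ∀ t ∈ Set.Icc (0 : ℝ) T,
      |Y t - Y' t| ≤
        (T * (M₁ * M₂ * Real.exp M₂ + M₄ * M₅) * Real.exp (M₂ * W)) *
          Real.exp (T * ((M₁ * M₃ * W + M₄) * Real.exp (2 * M₂ * W))) * Δ := by
  intro t ht
  obtain rfl : f = dossField σ b h := funext₂ hf
  have hσ' : Differentiable ℝ (deriv σ) :=
    (contDiff_succ_iff_deriv (n := 1).mp hσ).2.2.differentiable one_ne_zero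
  have hb' : Differentiable ℝ b := hb.differentiable one_ne_zero
  have hM₁ : 0 ≤ M₁ := (abs_nonneg _).trans (hbb 0)
  have hM₂ : 0 ≤ M₂ := (abs_nonneg _).trans (hσ'b 0)
  have hM₃ : 0 ≤ M₃ := (abs_nonneg _).trans (hσ''b 0)
  have hM₄ : 0 ≤ M₄ := (abs_nonneg _).trans (hb'b 0)
  have hM₅ : 0 ≤ M₅ := (abs_nonneg _).trans (hσb 0)
  have hwW : ∀ s ∈ Icc 0 T, |w s| ≤ W := fun s hs => hW ▸ hw.abs.le_sSup_image_Icc hs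
  have hwΔ : ∀ s ∈ Icc 0 T, |w s - w' s| ≤ Δ := fun s hs =>
    hΔ ▸ (hw.sub hw').abs.le_sSup_image_Icc hs
  have hT : 0 ≤ T := ht.1.trans ht.2
  have h0 : (0 : ℝ) ∈ Icc 0 T := ⟨le_rfl, hT⟩
  have hW0 : 0 ≤ W := (abs_nonneg _).trans (hwW 0 h0)
  have hΔ0 : 0 ≤ Δ := (abs_nonneg _).trans (hwΔ 0 h0)
  set κ := (M₁ * M₃ * W + M₄) * exp (2 * M₂ * W)
  set C := (M₁ * M₂ * exp M₂ + M₄ * M₅) * exp (M₂ * W)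
  have hbound : ∀ s ∈ Icc 0 T,
      |dossField σ b h (Y s) (w s) - dossField σ b h (Y' s) (w' s)| ≤
        κ * |Y s - Y' s| + C * Δ := fun s hs =>
    (abs_dossField_sub_dossField_le hσ' hσb hσ'b hσ''b hb' hbb hb'b hhy hhx (hwW s hs)
      ((hwΔ s hs).trans hΔ1) _ _).trans (by gcongr; exact hwΔ s hs)
  have hY : ∀ s ∈ Icc 0 T, HasDerivAt (fun s => Y s - Y' s)
      (dossField σ b h (Y s) (w s) - dossField σ b h (Y' s) (w' s)) s := fun s hs =>
    (hYode s hs).sub (hY'ode s hs)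
  calc |Y t - Y' t| ≤ C * Δ * t * exp (κ * t) :=
        norm_le_mul_exp_of_norm_deriv_right_le (by positivity) (by positivity)
          (fun s hs => (hY s hs).continuousAt.continuousWithinAt)
          (fun s hs => (hY s (Ico_subset_Icc_self hs)).hasDerivWithinAt) (by simp [hY0, hY'0])
          (fun s hs => hbound s (Ico_subset_Icc_self hs)) t ht
    _ ≤ C * Δ * T * exp (κ * T) := by gcongr <;> exact ht.2
    _ = T * (M₁ * M₂ * exp M₂ + M₄ * M₅) * exp (M₂ * W) * exp (T * κ) * Δ := by
        rw [mul_comm T κ]; simp only [C]; ring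

/-- Gronwall-type comparison of two solutions of the Doss–Sussmann ODE driven by
close paths `w` and `w̃`: `sup|Y − Ỹ| ≤ α exp(Tκ) sup|w − w̃|`, with
`α = T(M₁M₂ exp(M₂) + M₄M₅) exp(M₂ W)` and `κ = (M₁M₃ W + M₄) exp(2M₂ W)`,
where `W = sup_{[0,T]} |w|`. -/
theorem doss_ode_comparison
    (σ b : ℝ → ℝ) (h : ℝ → ℝ → ℝ) (M₁ M₂ M₃ M₄ M₅ : ℝ)
    (hM₁ : 0 < M₁) (hM₂ : 0 < M₂) (hM₃ : 0 < M₃) (hM₄ : 0 < M₄) (hM₅ : 0 < M₅)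
    (hσ : ContDiff ℝ 2 σ)
    (hσb : ∀ x, |σ x| ≤ M₅)
    (hσ'b : ∀ x, |deriv σ x| ≤ M₂)
    (hσ''b : ∀ x, |deriv (deriv σ) x| ≤ M₃)
    (hb : ContDiff ℝ 1 b)
    (hbb : ∀ x, |b x| ≤ M₁)
    (hb'b : ∀ x, |deriv b x| ≤ M₄)
    (hh0 : ∀ x, h x 0 = x)
    (hhy : ∀ x y, HasDerivAt (fun y => h x y) (σ (h x y)) y)
    (hhx : ∀ x y, HasDerivAt (fun x => h x y)
      (Real.exp (∫ s in (0:ℝ)..y, deriv σ (h x s))) x)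
    (f : ℝ → ℝ → ℝ)
    (hf : ∀ x y, f x y = Real.exp (-∫ u in (0:ℝ)..y, deriv σ (h x u)) * b (h x y))
    (T : ℝ) (hT : 0 < T) (x₀ : ℝ)
    (w w' : ℝ → ℝ)
    (hw : ContinuousOn w (Set.Icc 0 T)) (hw' : ContinuousOn w' (Set.Icc 0 T))
    (W Δ : ℝ)
    (hW : W = sSup ((fun t => |w t|) '' Set.Icc (0 : ℝ) T))
    (hΔ : Δ = sSup ((fun t => |w t - w' t|) '' Set.Icc (0 : ℝ) T))
    (hΔ1 : Δ ≤ 1)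
    (Y Y' : ℝ → ℝ)
    (hY0 : Y 0 = x₀) (hY'0 : Y' 0 = x₀)
    (hYode : ∀ t ∈ Set.Icc (0 : ℝ) T, HasDerivAt Y (f (Y t) (w t)) t)
    (hY'ode : ∀ t ∈ Set.Icc (0 : ℝ) T, HasDerivAt Y' (f (Y' t) (w' t)) t) :
    ∀ t ∈ Set.Icc (0 : ℝ) T,
      |Y t - Y' t| ≤
        (T * (M₁ * M₂ * Real.exp M₂ + M₄ * M₅) * Real.exp (M₂ * W)) *
          Real.exp (T * ((M₁ * M₃ * W + M₄) * Real.exp (2 * M₂ * W))) * Δ :=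
  doss_ode_comparison_general σ b h M₁ M₂ M₃ M₄ M₅ hσ hσb hσ'b hσ''b hb hbb hb'b hhy hhx f hf T x₀ w
    w' hw hw' W Δ hW hΔ hΔ1 Y Y' hY0 hY'0 hYode hY'ode
end
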